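/- Let p ≥ 1 and let a₁, a₂ ∈ B_∞ be of the form a₁ = a₁' τ_{p,p}^{±1} a₁'' and a₂ = a₂' τ_{p,p}^{±1} a₂'' with a₁', a₁'', a₂', a₂'' ∈ B_p. Define x *_i y = ∂^p(x⁻¹) a_i ∂^p(y) x for i = 1, 2. If [a₁', a₂''] = [a₂', a₁''] = [a₁', a₂'] = 1, then (B_∞, *₁, *₂) is a mutually left distributive system. -/

import Mathlib

/-- The braid relations on infinitely many strands. The generator with index
`i : ℕ` represents `σ_{i+1}`. -/
def braidRels : Set (FreeGroup ℕ) :=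
  {r | (∃ i j : ℕ, i + 2 ≤ j ∧
          r = FreeGroup.of i * FreeGroup.of j * (FreeGroup.of i)⁻¹ * (FreeGroup.of j)⁻¹) ∨
       (∃ i : ℕ,
          r = FreeGroup.of i * FreeGroup.of (i + 1) * FreeGroup.of i *
            (FreeGroup.of (i + 1) * FreeGroup.of i * FreeGroup.of (i + 1))⁻¹)}

/-- The braid group `B_∞` on infinitely many strands. -/
abbrev BInf : Type := PresentedGroup braidRels

/-- The generator `σ_i` of `B_∞` (for `i ≥ 1`). -/
def sigma (i : ℕ) : BInf := PresentedGroup.of (i - 1)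

theorem shift_aux : ∀ r ∈ braidRels,
    FreeGroup.lift (fun i => (PresentedGroup.of (i + 1) : BInf)) r = 1 := by
  have key : ∀ s ∈ braidRels, (PresentedGroup.mk braidRels s : BInf) = 1 := fun s hs =>
    (QuotientGroup.eq_one_iff _).mpr (Subgroup.subset_normalClosure hs)
  rintro r (⟨i, j, hij, rfl⟩ | ⟨i, rfl⟩)
  · have := key _ (Or.inl ⟨i + 1, j + 1, by omega, rfl⟩)
    simpa [PresentedGroup.of, map_mul, map_inv, PresentedGroup.mk] using this
  · have := key _ (Or.inr ⟨i + 1, rfl⟩)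
    simpa [PresentedGroup.of, map_mul, map_inv, PresentedGroup.mk] using this

/-- The shift endomorphism `∂ : B_∞ → B_∞`, `σ_i ↦ σ_{i+1}`. -/
noncomputable def shift : BInf →* BInf :=
  PresentedGroup.toGroup (f := fun i => (PresentedGroup.of (i + 1) : BInf)) shift_aux

/-- The subgroup `B_p ≤ B_∞` generated by `σ₁, …, σ_{p-1}`. -/
def Bsub (p : ℕ) : Subgroup BInf :=
  Subgroup.closure {x | ∃ i, 1 ≤ i ∧ i ≤ p - 1 ∧ x = sigma i}

/-- `δ_n = σ_{n-1} ⋯ σ₂ σ₁`. -/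
def delta (n : ℕ) : BInf :=
  (((List.range (n - 1)).reverse).map (fun k => sigma (k + 1))).prod

/-- `τ_{p,q} = δ_{p+1} · ∂(δ_{p+1}) ⋯ ∂^{q-1}(δ_{p+1})`. -/
noncomputable def tau (p q : ℕ) : BInf :=
  ((List.range q).map (fun k => (fun x => shift x)^[k] (delta (p + 1)))).prod

/-!
For an endomorphism `s` of a group, the operations `x ∘_a y = s(x)⁻¹ a s(y) x` satisfy the mixed
law `x ∘_A (y ∘_B z) = (x ∘_A y) ∘_B (x ∘_A z)` as soon as `A` and `B` commute with the image of
`s²` and `B s(A) A = s(A) A s(B)`, i.e. `B` lies in the twisted centralizer of `s(A) A`, which is a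
subgroup. For `s = ∂^p` and `A = a₁' τ^{±1} a₁''` it therefore suffices to put `a₂'`, `a₂''` and
`τ = τ_{p,p}` into it. This uses only that conjugation by `τ` exchanges each `x ∈ B_p` with
`∂^p(x)`, that `τ ∂^p(τ) τ = ∂^p(τ) τ ∂^p(τ)` (the same exchange for `τ ∈ B_{2p}` and
`τ_{p,2p} = τ ∂^p(τ)`), and that `B_n` commutes with `∂^n(B_∞)`.
-/

section ShiftedConjugacy

variable {G : Type*} [Group G] (s : G →* G)

def shiftedConj (a x y : G) : G := s x⁻¹ * a * s y * x

def twistedCentralizer (w : G) : Subgroup G :=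
  MonoidHom.eqLocus (MulAut.conj w⁻¹).toMonoidHom s

variable {s}

theorem mem_twistedCentralizer {w x : G} :
    x ∈ twistedCentralizer s w ↔ x * w = w * s x := by
  change (MulAut.conj w⁻¹) x = s x ↔ _
  rw [MulAut.conj_apply, inv_inv, mul_assoc, inv_mul_eq_iff_eq_mul]

theorem mem_twistedCentralizer_inv {w x : G} :
    x ∈ twistedCentralizer s w⁻¹ ↔ w * x = s x * w := by
  rw [mem_twistedCentralizer, mul_inv_eq_iff_eq_mul, mul_assoc, eq_inv_mul_iff_mul_eq]

theorem shiftedConj_left_distrib {A B : G} (hA : ∀ z, Commute A (s (s z)))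
    (hB : ∀ z, Commute B (s (s z))) (hAB : B ∈ twistedCentralizer s (s A * A)) (x y z : G) :
    shiftedConj s A x (shiftedConj s B y z) =
      shiftedConj s B (shiftedConj s A x y) (shiftedConj s A x z) := by
  have hAB' : A * s B = (s A)⁻¹ * B * s A * A := by
    rw [mem_twistedCentralizer] at hAB
    rw [show (s A)⁻¹ * B * s A * A = (s A)⁻¹ * (B * (s A * A)) by group, hAB]
    group
  simp only [shiftedConj, map_mul, map_inv]
  calc (s x)⁻¹ * A * ((s (s y))⁻¹ * s B * s (s z) * s y) * x
      = (s x)⁻¹ * (A * (s (s y))⁻¹) * s B * s (s z) * s y * x := by group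
    _ = (s x)⁻¹ * (s (s y))⁻¹ * (A * s B) * s (s z) * s y * x := by
        rw [(hA y).inv_right.eq]; group
    _ = (s x)⁻¹ * (s (s y))⁻¹ * (s A)⁻¹ * (B * s (s x)) * (s (s x))⁻¹ * s A * (A * s (s z))
          * s y * x := by rw [hAB']; group
    _ = ((s (s x))⁻¹ * s A * s (s y) * s x)⁻¹ * B * ((s (s x))⁻¹ * s A * s (s z) * s x) *
          ((s x)⁻¹ * A * s y * x) := by rw [(hB x).eq, (hA z).eq]; group

end ShiftedConjugacy

section Crossing

variable {G : Type*} [Group G] {s : G →* G} {H : Subgroup G} {T : G}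

/-- Abstracts the triple `(∂^p, B_p, τ_{p,p})`. -/
structure IsCrossing (s : G →* G) (H : Subgroup G) (T : G) : Prop where
  mul_eq : ∀ x ∈ H, x * T = T * s x
  map_mul_eq : ∀ x ∈ H, s x * T = T * x
  braid : T * s T * T = s T * T * s T
  commute_map : ∀ x ∈ H, ∀ z, Commute x (s z)
  commute_map_map : ∀ z, Commute T (s (s z))

namespace IsCrossing

theorem inv (hT : IsCrossing s H T) : IsCrossing s H T⁻¹ where
  mul_eq x hx := by
    rw [mul_inv_eq_iff_eq_mul, mul_assoc, eq_inv_mul_iff_mul_eq, hT.map_mul_eq x hx]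
  map_mul_eq x hx := by
    rw [mul_inv_eq_iff_eq_mul, mul_assoc, eq_inv_mul_iff_mul_eq, hT.mul_eq x hx]
  braid := by
    simp only [map_inv, ← mul_inv_rev, ← mul_assoc, hT.braid]
  commute_map x hx z := hT.commute_map x hx z
  commute_map_map z := (hT.commute_map_map z).inv_left

theorem zpow {e : ℤ} (hT : IsCrossing s H T) (he : e = 1 ∨ e = -1) : IsCrossing s H (T ^ e) := by
  rcases he with rfl | rfl
  · simpa using hT
  · simpa using hT.inv

theorem commute_map_map_of_mem (hT : IsCrossing s H T) {a b : G} (ha : a ∈ H) (hb : b ∈ H)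
    (z : G) : Commute (a * T * b) (s (s z)) :=
  ((hT.commute_map a ha _).mul_left (hT.commute_map_map z)).mul_left (hT.commute_map b hb _)

variable {a b : G}

theorem mem_twistedCentralizer_of_commute (hT : IsCrossing s H T) (hb : b ∈ H)
    {c : G} (hc : c ∈ H) (hca : Commute c a) :
    c ∈ twistedCentralizer s (s (a * T * b) * (a * T * b)) := by
  have hcW : Commute c (s (a * T * b) * a) := (hT.commute_map c hc _).mul_right hca
  rw [mem_twistedCentralizer]
  calc c * (s (a * T * b) * (a * T * b))
      = (c * (s (a * T * b) * a)) * T * b := by group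
    _ = s (a * T * b) * a * (c * T) * b := by rw [hcW.eq]; group
    _ = s (a * T * b) * a * T * (s c * b) := by rw [hT.mul_eq c hc]; group
    _ = s (a * T * b) * (a * T * b) * s c := by rw [(hT.commute_map b hb c).symm.eq]; group

theorem self_mem_twistedCentralizer (hT : IsCrossing s H T) (ha : a ∈ H) (hb : b ∈ H) :
    T ∈ twistedCentralizer s (s (a * T * b) * (a * T * b)) := by
  have hTb : s T * s b = s (s b) * s T := by
    rw [← map_mul, ← map_mul, hT.map_mul_eq b hb]
  have haab : Commute a (s a * s (s b)) :=
    (hT.commute_map a ha a).mul_right (hT.commute_map a ha (s b))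
  rw [mem_twistedCentralizer]
  simp only [map_mul]
  calc T * (s a * s T * s b * (a * T * b))
      = (T * s a) * (s T * s b) * a * T * b := by group
    _ = a * (T * s (s b)) * (s T * a) * T * b := by rw [← hT.mul_eq a ha, hTb]; group
    _ = a * s (s b) * (T * a) * s T * T * b := by
        rw [(hT.commute_map_map b).eq, ← (hT.commute_map a ha T).eq]; group
    _ = a * (s (s b) * s a) * (T * s T * T) * b := by rw [← hT.map_mul_eq a ha]; group
    _ = (a * (s a * s (s b))) * s T * T * (s T * b) := by
        rw [hT.braid, ← ((hT.commute_map a ha b).map s).eq]; group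
    _ = s a * s (s b) * (a * s T) * T * b * s T := by
        rw [haab.eq, (hT.commute_map b hb T).symm.eq]; group
    _ = s a * s T * s b * (a * T * b) * s T := by
        rw [(hT.commute_map a ha T).eq, mul_assoc (s a) (s T), hTb]; group

theorem mul_zpow_mul_mem_twistedCentralizer (hT : IsCrossing s H T) {e : ℤ}
    (he : e = 1 ∨ e = -1) (f : ℤ) (ha : a ∈ H) (hb : b ∈ H) {c d : G} (hc : c ∈ H) (hd : d ∈ H)
    (hca : Commute c a) (hda : Commute d a) :
    c * T ^ f * d ∈ twistedCentralizer s (s (a * T ^ e * b) * (a * T ^ e * b)) := by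
  have hTe := hT.zpow he
  have hT_mem : T ∈ twistedCentralizer s (s (a * T ^ e * b) * (a * T ^ e * b)) := by
    have hTe_mem := hTe.self_mem_twistedCentralizer ha hb
    rcases he with rfl | rfl
    · simpa using hTe_mem
    · simpa using inv_mem hTe_mem
  exact mul_mem (mul_mem (hTe.mem_twistedCentralizer_of_commute hb hc hca) (zpow_mem hT_mem f))
    (hTe.mem_twistedCentralizer_of_commute hb hd hda)

end IsCrossing

end Crossing

namespace BInf

/-- `gen i` is `σ_{i+1}`; indexing from `0` avoids the junk value `sigma 0 = sigma 1`. -/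
def gen (i : ℕ) : BInf := PresentedGroup.of i

theorem gen_commute {i j : ℕ} (h : i + 2 ≤ j) : Commute (gen i) (gen j) := by
  have hrel := PresentedGroup.one_of_mem (rels := braidRels)
    (x := .of i * .of j * (.of i)⁻¹ * (.of j)⁻¹) (Or.inl ⟨i, j, h, rfl⟩)
  simp only [map_mul, map_inv] at hrel
  exact commutatorElement_eq_one_iff_commute.mp hrel

theorem gen_braid (i : ℕ) : gen i * gen (i + 1) * gen i = gen (i + 1) * gen i * gen (i + 1) := by
  have hrel := PresentedGroup.mk_eq_mk_of_mul_inv_mem (rels := braidRels)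
    (x := .of i * .of (i + 1) * .of i) (y := .of (i + 1) * .of i * .of (i + 1)) (Or.inr ⟨i, rfl⟩)
  simp only [map_mul] at hrel
  exact hrel

noncomputable def shiftPow : ℕ → BInf →* BInf
  | 0 => MonoidHom.id BInf
  | k + 1 => (shiftPow k).comp shift

theorem shiftPow_apply (k : ℕ) (x : BInf) : shiftPow k x = (fun w => shift w)^[k] x := by
  induction k generalizing x with
  | zero => rfl
  | succ k ih => exact ih (shift x)

theorem shiftPow_succ_apply (k : ℕ) (x : BInf) : shiftPow (k + 1) x = shiftPow k (shift x) :=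
  rfl

theorem shiftPow_add_apply (k l : ℕ) (x : BInf) :
    shiftPow (k + l) x = shiftPow k (shiftPow l x) := by
  induction l generalizing x with
  | zero => rfl
  | succ l ih => exact ih (shift x)

theorem shift_gen (i : ℕ) : shift (gen i) = gen (i + 1) :=
  PresentedGroup.toGroup.of shift_aux

theorem shiftPow_gen (k i : ℕ) : shiftPow k (gen i) = gen (i + k) := by
  induction k generalizing i with
  | zero => rfl
  | succ k ih =>
    rw [shiftPow_succ_apply, shift_gen, ih]
    congr 1
    omega

variable {n : ℕ} {x : BInf}

theorem Bsub_le_iff {K : Subgroup BInf} : Bsub n ≤ K ↔ ∀ i, i + 2 ≤ n → gen i ∈ K := by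
  refine ⟨fun hK i hi => hK (Subgroup.subset_closure ⟨i + 1, by omega, by omega, rfl⟩), ?_⟩
  intro hK
  rw [Bsub, Subgroup.closure_le]
  rintro _ ⟨i, hi, hin, rfl⟩
  exact hK (i - 1) (by omega)

theorem gen_mem_Bsub {i : ℕ} (h : i + 2 ≤ n) : gen i ∈ Bsub n :=
  Bsub_le_iff.mp le_rfl i h

theorem Bsub_mono {m : ℕ} (h : n ≤ m) : Bsub n ≤ Bsub m :=
  Bsub_le_iff.mpr fun _ hi => gen_mem_Bsub (by omega)

theorem shiftPow_mem_Bsub (k : ℕ) (hx : x ∈ Bsub n) : shiftPow k x ∈ Bsub (n + k) := by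
  refine (Bsub_le_iff (K := (Bsub (n + k)).comap (shiftPow k)).mpr fun i hi => ?_) hx
  rw [Subgroup.mem_comap, shiftPow_gen]
  exact gen_mem_Bsub (by omega)

theorem commute_gen_of_mem_Bsub {j : ℕ} (hx : x ∈ Bsub n) (h : n ≤ j) : Commute x (gen j) := by
  refine Subgroup.mem_centralizer_singleton_iff.mp
    ((Bsub_le_iff (K := Subgroup.centralizer {gen j})).mpr (fun i hi => ?_) hx)
  exact Subgroup.mem_centralizer_singleton_iff.mpr (gen_commute (by omega)).eq

theorem commute_shiftPow_of_mem_Bsub {k : ℕ} (hx : x ∈ Bsub n) (h : n ≤ k) (z : BInf) :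
    Commute x (shiftPow k z) := by
  have hgen : Subgroup.closure (Set.range gen) ≤ (Subgroup.centralizer {x}).comap (shiftPow k) := by
    rw [Subgroup.closure_le]
    rintro _ ⟨i, rfl⟩
    rw [SetLike.mem_coe, Subgroup.mem_comap, shiftPow_gen, Subgroup.mem_centralizer_singleton_iff]
    exact (commute_gen_of_mem_Bsub hx (by omega)).symm.eq
  have hz := hgen (PresentedGroup.closure_range_of braidRels ▸ Subgroup.mem_top z)
  exact (Subgroup.mem_centralizer_singleton_iff.mp hz).symm

theorem delta_succ_succ (n : ℕ) : delta (n + 2) = gen n * delta (n + 1) := by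
  rw [delta, delta, show n + 2 - 1 = n + 1 by omega, Nat.add_sub_cancel, List.range_succ,
    List.reverse_concat, List.map_cons, List.prod_cons]
  rfl

theorem delta_mem_Bsub : ∀ n, delta n ∈ Bsub n
  | 0 | 1 => by simp [delta]
  | n + 2 => delta_succ_succ n ▸
      mul_mem (gen_mem_Bsub le_rfl) (Bsub_mono (by omega) (delta_mem_Bsub (n + 1)))

theorem gen_mul_delta {j : ℕ} (hn : j + 2 ≤ n) :
    gen j * delta (n + 1) = delta (n + 1) * gen (j + 1) := by
  induction n with
  | zero => omega
  | succ n ih =>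
    rw [delta_succ_succ]
    rcases Nat.lt_or_ge (j + 2) (n + 1) with h | h
    · rw [← mul_assoc, (gen_commute (by omega : j + 2 ≤ n)).eq, mul_assoc, ih (by omega),
        mul_assoc]
    · obtain rfl : n = j + 1 := by omega
      have hc := commute_gen_of_mem_Bsub (delta_mem_Bsub (j + 1)) le_rfl
      rw [delta_succ_succ]
      calc gen j * (gen (j + 1) * (gen j * delta (j + 1)))
          = gen j * gen (j + 1) * gen j * delta (j + 1) := by group
        _ = gen (j + 1) * gen j * (gen (j + 1) * delta (j + 1)) := by rw [gen_braid]; group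
        _ = gen (j + 1) * (gen j * delta (j + 1)) * gen (j + 1) := by rw [← hc.eq]; group

theorem mul_delta_of_mem_Bsub (hx : x ∈ Bsub n) : x * delta (n + 1) = delta (n + 1) * shift x :=
  mem_twistedCentralizer.mp <| Bsub_le_iff.mpr (fun i hi => by
    rw [mem_twistedCentralizer, shift_gen, gen_mul_delta hi]) hx

theorem tau_zero (p : ℕ) : tau p 0 = 1 := by
  simp [tau]

theorem tau_succ (p q : ℕ) : tau p (q + 1) = tau p q * shiftPow q (delta (p + 1)) := by
  simp [tau, List.range_succ, shiftPow_apply]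

theorem tau_one (p : ℕ) : tau p 1 = delta (p + 1) := by
  rw [tau_succ, tau_zero, one_mul]
  rfl

theorem tau_add (p q r : ℕ) : tau p (q + r) = tau p q * shiftPow q (tau p r) := by
  induction r with
  | zero => rw [tau_zero, map_one, mul_one, Nat.add_zero]
  | succ r ih => rw [← add_assoc, tau_succ, ih, tau_succ, map_mul, shiftPow_add_apply, mul_assoc]

theorem tau_mem_Bsub (p q : ℕ) : tau p q ∈ Bsub (p + q) := by
  induction q with
  | zero => rw [tau_zero]; exact one_mem _
  | succ q ih =>
    rw [tau_succ]
    exact mul_mem (Bsub_mono (by omega) ih)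
      (Bsub_mono (by omega) (shiftPow_mem_Bsub q (delta_mem_Bsub (p + 1))))

theorem mul_tau_of_mem_Bsub {p : ℕ} (hx : x ∈ Bsub p) (q : ℕ) :
    x * tau p q = tau p q * shiftPow q x := by
  induction q with
  | zero => rw [tau_zero, one_mul, mul_one]; rfl
  | succ q ih =>
    rw [tau_succ, shiftPow_succ_apply, ← mul_assoc, ih, mul_assoc, ← map_mul,
      mul_delta_of_mem_Bsub hx, map_mul, mul_assoc]

theorem gen_mul_tau_two (p : ℕ) : gen p * tau p 2 = tau p 2 * gen 0 := by
  induction p with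
  | zero => simp [tau_add 0 1 1, tau_one, delta]
  | succ p ih =>
    rw [tau_add _ 1 1, tau_one] at ih ⊢
    have hD : Commute (delta (p + 1)) (gen (p + 1)) :=
      commute_gen_of_mem_Bsub (delta_mem_Bsub (p + 1)) le_rfl
    set E := shiftPow 1 (delta (p + 1))
    have hE : shiftPow 1 (delta (p + 2)) = gen (p + 1) * E := by
      rw [delta_succ_succ, map_mul, shiftPow_gen]
    rw [hE, delta_succ_succ]
    calc gen (p + 1) * (gen p * delta (p + 1) * (gen (p + 1) * E))
        = gen (p + 1) * gen p * (delta (p + 1) * gen (p + 1)) * E := by group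
      _ = gen (p + 1) * gen p * gen (p + 1) * (delta (p + 1) * E) := by rw [hD.eq]; group
      _ = gen p * gen (p + 1) * (gen p * (delta (p + 1) * E)) := by rw [← gen_braid]; group
      _ = gen p * (gen (p + 1) * delta (p + 1)) * E * gen 0 := by rw [ih]; group
      _ = gen p * delta (p + 1) * (gen (p + 1) * E) * gen 0 := by rw [← hD.eq]; group

theorem gen_add_mul_tau (p : ℕ) {j q : ℕ} (h : j + 2 ≤ q) :
    gen (p + j) * tau p q = tau p q * gen j := by
  induction j generalizing q with
  | zero =>
    obtain ⟨r, rfl⟩ : ∃ r, q = 2 + r := ⟨q - 2, by omega⟩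
    have hc := commute_shiftPow_of_mem_Bsub (gen_mem_Bsub (n := 2) le_rfl) le_rfl (tau p r)
    rw [tau_add, ← mul_assoc, Nat.add_zero, gen_mul_tau_two, mul_assoc, hc.eq, mul_assoc]
  | succ j ih =>
    obtain ⟨r, rfl⟩ : ∃ r, q = 1 + r := ⟨q - 1, by omega⟩
    have hc := commute_gen_of_mem_Bsub (delta_mem_Bsub (p + 1)) (by omega : p + 1 ≤ p + (j + 1))
    rw [tau_add, tau_one, ← mul_assoc, ← hc.eq, mul_assoc, ← add_assoc,
      show gen (p + j + 1) = shiftPow 1 (gen (p + j)) from (shiftPow_gen 1 _).symm, ← map_mul,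
      ih (by omega), map_mul, shiftPow_gen, mul_assoc]

theorem shiftPow_mul_tau_of_mem_Bsub (p : ℕ) {q : ℕ} (hx : x ∈ Bsub q) :
    shiftPow p x * tau p q = tau p q * x :=
  (mem_twistedCentralizer_inv.mp <| Bsub_le_iff.mpr (fun i hi => by
    rw [mem_twistedCentralizer_inv, shiftPow_gen, Nat.add_comm, gen_add_mul_tau p hi]) hx).symm

theorem isCrossing_tau (p : ℕ) : IsCrossing (shiftPow p) (Bsub p) (tau p p) where
  mul_eq _ hx := mul_tau_of_mem_Bsub hx p
  map_mul_eq _ hx := shiftPow_mul_tau_of_mem_Bsub p hx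
  braid := by
    have h := shiftPow_mul_tau_of_mem_Bsub p (tau_mem_Bsub p p)
    rw [tau_add] at h
    simpa only [mul_assoc] using h.symm
  commute_map _ hx := commute_shiftPow_of_mem_Bsub hx le_rfl
  commute_map_map z := by
    rw [← shiftPow_add_apply]
    exact commute_shiftPow_of_mem_Bsub (tau_mem_Bsub p p) le_rfl z

end BInf

theorem gen_shifted_conjugacy_mutual_LD_general (p : ℕ)
    (e₁ e₂ : ℤ) (he₁ : e₁ = 1 ∨ e₁ = -1) (he₂ : e₂ = 1 ∨ e₂ = -1)
    (a₁' a₁'' a₂' a₂'' : BInf)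
    (h₁' : a₁' ∈ Bsub p) (h₁'' : a₁'' ∈ Bsub p)
    (h₂' : a₂' ∈ Bsub p) (h₂'' : a₂'' ∈ Bsub p)
    (hc₁ : Commute a₁' a₂'') (hc₂ : Commute a₂' a₁'') (hc₃ : Commute a₁' a₂')
    (a₁ a₂ : BInf)
    (ha₁ : a₁ = a₁' * tau p p ^ e₁ * a₁'')
    (ha₂ : a₂ = a₂' * tau p p ^ e₂ * a₂'')
    (op₁ op₂ : BInf → BInf → BInf)
    (hop₁ : op₁ = fun x y => (fun w => shift w)^[p] x⁻¹ * a₁ * (fun w => shift w)^[p] y * x)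
    (hop₂ : op₂ = fun x y => (fun w => shift w)^[p] x⁻¹ * a₂ * (fun w => shift w)^[p] y * x) :
    (∀ x y z, op₁ x (op₂ y z) = op₂ (op₁ x y) (op₁ x z)) ∧
    (∀ x y z, op₂ x (op₁ y z) = op₁ (op₂ x y) (op₂ x z)) := by
  have hop : ∀ a : BInf, (fun x y => (fun w => shift w)^[p] x⁻¹ * a * (fun w => shift w)^[p] y * x)
      = shiftedConj (BInf.shiftPow p) a := fun a => by
    funext x y
    simp only [shiftedConj, BInf.shiftPow_apply]
  subst ha₁ ha₂ hop₁ hop₂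
  rw [hop, hop]
  have hT := BInf.isCrossing_tau p
  have hA₁ := (hT.zpow he₁).commute_map_map_of_mem h₁' h₁''
  have hA₂ := (hT.zpow he₂).commute_map_map_of_mem h₂' h₂''
  exact ⟨shiftedConj_left_distrib hA₁ hA₂
      (hT.mul_zpow_mul_mem_twistedCentralizer he₁ e₂ h₁' h₁'' h₂' h₂'' hc₃.symm hc₁.symm),
    shiftedConj_left_distrib hA₂ hA₁
      (hT.mul_zpow_mul_mem_twistedCentralizer he₂ e₁ h₂' h₂'' h₁' h₁'' hc₃ hc₂.symm)⟩

/-- Generalized shifted conjugacy: if `a₁ = a₁' τ_{p,p}^{±1} a₁''` and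
`a₂ = a₂' τ_{p,p}^{±1} a₂''` with `a₁', a₁'', a₂', a₂'' ∈ B_p` and
`[a₁', a₂''] = [a₂', a₁''] = [a₁', a₂'] = 1`, then the operations
`x *ᵢ y = ∂^p(x⁻¹) aᵢ ∂^p(y) x` form a mutually left distributive system. -/
theorem gen_shifted_conjugacy_mutual_LD (p : ℕ) (hp : 1 ≤ p)
    (e₁ e₂ : ℤ) (he₁ : e₁ = 1 ∨ e₁ = -1) (he₂ : e₂ = 1 ∨ e₂ = -1)
    (a₁' a₁'' a₂' a₂'' : BInf)
    (h₁' : a₁' ∈ Bsub p) (h₁'' : a₁'' ∈ Bsub p)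
    (h₂' : a₂' ∈ Bsub p) (h₂'' : a₂'' ∈ Bsub p)
    (hc₁ : Commute a₁' a₂'') (hc₂ : Commute a₂' a₁'') (hc₃ : Commute a₁' a₂')
    (a₁ a₂ : BInf)
    (ha₁ : a₁ = a₁' * tau p p ^ e₁ * a₁'')
    (ha₂ : a₂ = a₂' * tau p p ^ e₂ * a₂'')
    (op₁ op₂ : BInf → BInf → BInf)
    (hop₁ : op₁ = fun x y => (fun w => shift w)^[p] x⁻¹ * a₁ * (fun w => shift w)^[p] y * x)
    (hop₂ : op₂ = fun x y => (fun w => shift w)^[p] x⁻¹ * a₂ * (fun w => shift w)^[p] y * x) :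
    (∀ x y z, op₁ x (op₂ y z) = op₂ (op₁ x y) (op₁ x z)) ∧
    (∀ x y z, op₂ x (op₁ y z) = op₁ (op₂ x y) (op₂ x z)) :=
  gen_shifted_conjugacy_mutual_LD_general p e₁ e₂ he₁ he₂ a₁' a₁'' a₂' a₂'' h₁' h₁'' h₂' h₂'' hc₁
    hc₂ hc₃ a₁ a₂ ha₁ ha₂ op₁ op₂ hop₁ hop₂
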